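/- Let F be a finite field with |F| ≥ k + 2t, where k ≥ 1 and t ≥ 1 are integers, and let f : F^k → S be any function. Then there exists a parity map p : F^k → F^{2t} such that for all distinct messages u, v (in particular for all u, v with f(u) ≠ f(v)), the Hamming distance between the concatenated codewords (u, p(u)) and (v, p(v)) is at least 2t+1. Consequently, the optimal redundancy of an (f,t)-FCC over F equals 2t whenever |F| ≥ k + 2t and f is not constant. -/
import Mathlib

open Finset Polynomial

lemma hammingDist_appendX {α : Type*} [DecidableEq α] {k r : ℕ} (u v : Fin k → α)
    (x y : Fin r → α) :
    hammingDist (Fin.append u x) (Fin.append v y) = hammingDist u v + hammingDist x y := by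
  simp only [hammingDist, Finset.card_filter, Fin.sum_univ_add, Fin.append_left,
    Fin.append_right]

/-- Path lemma: if `f` distinguishes `u` and `v`, it distinguishes two messages at
Hamming distance at most 1. -/
lemma exists_adjacent {α : Type*} [DecidableEq α] {S : Type*} {k : ℕ}
    (f : (Fin k → α) → S) :
    ∀ n (u v : Fin k → α), hammingDist u v ≤ n → f u ≠ f v →
      ∃ u' v' : Fin k → α, hammingDist u' v' ≤ 1 ∧ f u' ≠ f v' := by
  intro n
  induction n with
  | zero => intro u v h hf; exact ⟨u, v, h.trans (by norm_num), hf⟩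
  | succ n ih =>
    intro u v h hf
    by_cases hle : hammingDist u v ≤ n
    · exact ih u v hle hf
    have hpos : 0 < hammingDist u v := by omega
    rw [hammingDist_pos] at hpos
    obtain ⟨i, hi⟩ := Function.ne_iff.mp hpos
    set w : Fin k → α := Function.update u i (v i) with hw
    have hww : (Finset.univ.filter fun j => w j ≠ v j)
        = (Finset.univ.filter fun j => u j ≠ v j) \ ({i} : Finset (Fin k)) := by
      ext j
      rcases eq_or_ne j i with rfl | hji
      · simp [hw]
      · simp [hw, Function.update_of_ne hji, hji]
    have hdw : hammingDist w v ≤ n := by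
      have : hammingDist w v = hammingDist u v - 1 := by
        rw [hammingDist, hww, Finset.card_sdiff_of_subset (by simpa [Finset.singleton_subset_iff] using hi)]
        simp [hammingDist]
      omega
    by_cases hfw : f u = f w
    · exact ih w v hdw (hfw ▸ hf)
    · refine ⟨u, w, ?_, hfw⟩
      have : (Finset.univ.filter fun j => u j ≠ w j) ⊆ ({i} : Finset (Fin k)) := by
        intro j
        rcases eq_or_ne j i with rfl | hji
        · simp
        · simp [hw, Function.update_of_ne hji]
      simpa [hammingDist] using (Finset.card_le_card this).trans (by simp)

lemma exists_good_parity {F : Type*} [Field F] [Fintype F] [DecidableEq F] (k t : ℕ)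
    (hq : k + 2 * t ≤ Fintype.card F) :
    ∃ p : (Fin k → F) → Fin (2 * t) → F,
      ∀ u v : Fin k → F, u ≠ v →
        2 * t + 1 ≤ hammingDist (Fin.append u (p u)) (Fin.append v (p v)) := by
  obtain ⟨a⟩ := Function.Embedding.nonempty_of_card_le (by simpa using hq :
    Fintype.card (Fin (k + 2 * t)) ≤ Fintype.card F)
  set x : Fin k → F := fun i => a (Fin.castAdd (2 * t) i) with hx
  have hinj : Set.InjOn x (Finset.univ : Finset (Fin k)) := by
    intro i _ j _ h
    exact Fin.castAdd_injective _ _ (a.injective h)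
  set q : (Fin k → F) → F[X] := fun u => Lagrange.interpolate Finset.univ x u with hqdef
  set p : (Fin k → F) → Fin (2 * t) → F :=
    fun u j => (q u).eval (a (Fin.natAdd k j)) with hp
  refine ⟨p, fun u v huv => ?_⟩
  have happ : ∀ u : Fin k → F, Fin.append u (p u) = fun i => (q u).eval (a i) := by
    intro u
    funext i
    refine Fin.addCases (fun i => ?_) (fun i => ?_) i
    · rw [Fin.append_left]
      exact (Lagrange.eval_interpolate_at_node u hinj (Finset.mem_univ i)).symm
    · rw [Fin.append_right]
  rw [happ u, happ v]
  -- difference polynomial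
  set D : F[X] := q u - q v with hD
  have hDne : D ≠ 0 := by
    obtain ⟨i, hi⟩ := Function.ne_iff.mp huv
    intro h0
    apply hi
    have := congrArg (Polynomial.eval (x i)) (sub_eq_zero.mp h0)
    rwa [hqdef, Lagrange.eval_interpolate_at_node u hinj (Finset.mem_univ i),
      Lagrange.eval_interpolate_at_node v hinj (Finset.mem_univ i)] at this
  have hdeg : D.natDegree < k := by
    have h1 : D.degree < (k : ℕ∞) := by
      apply lt_of_le_of_lt (Polynomial.degree_sub_le _ _)
      have hu := Lagrange.degree_interpolate_lt u hinj
      have hv := Lagrange.degree_interpolate_lt v hinj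
      simp only [Finset.card_univ, Fintype.card_fin] at hu hv
      exact max_lt hu hv
    exact Polynomial.natDegree_lt_iff_degree_lt (n := k)
      (by intro h; exact hDne h) |>.mpr (by exact_mod_cast h1)
  -- agreement set
  set A : Finset (Fin (k + 2 * t)) :=
    {i | (q u).eval (a i) = (q v).eval (a i)} with hA
  have hAcard : A.card < k := by
    have hsub : A.image a ⊆ D.roots.toFinset := by
      intro y hy
      obtain ⟨i, hi, rfl⟩ := Finset.mem_image.mp hy
      rw [Multiset.mem_toFinset, Polynomial.mem_roots hDne]
      simp only [hA, Finset.mem_filter] at hi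
      simp [hD, Polynomial.IsRoot, sub_eq_zero, hi.2]
    calc A.card = (A.image a).card := (Finset.card_image_of_injective _ a.injective).symm
      _ ≤ D.roots.toFinset.card := Finset.card_le_card hsub
      _ ≤ Multiset.card D.roots := Multiset.toFinset_card_le _
      _ ≤ D.natDegree := Polynomial.card_roots' D
      _ < k := hdeg
  have hsplit := Finset.card_filter_add_card_filter_not
    (s := (Finset.univ : Finset (Fin (k + 2 * t))))
    (p := fun i => (q u).eval (a i) = (q v).eval (a i))
  have hcardD : hammingDist (fun i => (q u).eval (a i)) (fun i => (q v).eval (a i))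
      = (Finset.univ.filter fun i => ¬((q u).eval (a i) = (q v).eval (a i))).card := by
    rfl
  rw [hcardD]
  simp only [Finset.card_univ, Fintype.card_fin] at hsplit
  have : A.card = (Finset.univ.filter fun i => (q u).eval (a i) = (q v).eval (a i)).card := rfl
  omega


/-- A parity map `p` yields an `(f,t)`-FCC over the finite field `F`: messages with
distinct `f`-values have concatenated codewords at Hamming distance at least `2t+1`. -/
def IsFCC {F : Type*} [Fintype F] [DecidableEq F] {S : Type*} {k r : ℕ} (t : ℕ)
    (f : (Fin k → F) → S) (p : (Fin k → F) → Fin r → F) : Prop :=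
  ∀ u v : Fin k → F, f u ≠ f v →
    2 * t + 1 ≤ hammingDist (Fin.append u (p u)) (Fin.append v (p v))

/-- The optimal redundancy `r_f(k,t)` over `F`: the least `r` for which an `(f,t)`-FCC
exists. -/
noncomputable def optRedundancy {F : Type*} [Fintype F] [DecidableEq F] {S : Type*}
    (k t : ℕ) (f : (Fin k → F) → S) : ℕ :=
  sInf {r : ℕ | ∃ p : (Fin k → F) → Fin r → F, IsFCC t f p}

/-- If `|F| ≥ k + 2t`, there is a parity map `p : F^k → F^{2t}` separating
all distinct messages by distance `2t+1`; consequently, for non-constant `f`, the optimal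
redundancy of an `(f,t)`-FCC over `F` equals `2t`. -/
theorem fcc_redundancy_eq_two_t_of_large_field {F : Type*} [Field F] [Fintype F]
    [DecidableEq F] {S : Type*} (k t : ℕ) (hk : 1 ≤ k) (ht : 1 ≤ t)
    (hq : k + 2 * t ≤ Fintype.card F) (f : (Fin k → F) → S) :
    (∃ p : (Fin k → F) → Fin (2 * t) → F,
      ∀ u v : Fin k → F, u ≠ v →
        2 * t + 1 ≤ hammingDist (Fin.append u (p u)) (Fin.append v (p v))) ∧
    ((∃ u v : Fin k → F, f u ≠ f v) → optRedundancy k t f = 2 * t) := by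
  obtain ⟨p, hp⟩ := exists_good_parity k t hq
  refine ⟨⟨p, hp⟩, fun ⟨u0, v0, hne⟩ => ?_⟩
  have hmem : 2 * t ∈ {r : ℕ | ∃ p : (Fin k → F) → Fin r → F, IsFCC t f p} :=
    ⟨p, fun u v huv => hp u v (fun h => huv (h ▸ rfl))⟩
  have hlb : ∀ r ∈ {r : ℕ | ∃ p : (Fin k → F) → Fin r → F, IsFCC t f p}, 2 * t ≤ r := by
    rintro r ⟨p', hp'⟩
    obtain ⟨u', v', hd, hf⟩ :=
      exists_adjacent f (hammingDist u0 v0) u0 v0 le_rfl hne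
    have h1 := hp' u' v' hf
    rw [hammingDist_appendX] at h1
    have h2 : hammingDist (p' u') (p' v') ≤ r := by
      simpa using (hammingDist_le_card_fintype
        (x := p' u') (y := p' v'))
    omega
  exact le_antisymm (Nat.sInf_le hmem) (le_csInf ⟨_, hmem⟩ hlb)
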